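/- For 0 ≤ n ≤ m: if m = n + 2f for some f ∈ ℕ then w_{m,n}(q) = [n]!·T_{f,n}(q²)/(1−q⁻²)^f, where T_{f,n}(q²) denotes the polynomial T_{f,n} evaluated at q² ∈ ℚ(q); and w_{m,n}(q) = 0 if m ≢ n (mod 2). -/

import Mathlib

/-!
Setting: `K = ℚ(q)` is the field of rational functions over `ℚ`; `U⁻ = ℚ(q)[F]` and
`Uⁱ = ℚ(q)[B]` are both realized as `Polynomial K`, with `F` resp. `B` the variable
`Polynomial.X`.
-/

noncomputable section

abbrev K : Type := RatFunc ℚ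

/-- The variable `q` of `ℚ(q)`. -/
def q : K := RatFunc.X

/-- The quantum integer `[n] = (qⁿ - q⁻ⁿ)/(q - q⁻¹)`. -/
def qint (n : ℕ) : K := (q ^ n - q⁻¹ ^ n) / (q - q⁻¹)

/-- The quantum factorial `[n]! = [1][2]⋯[n]`, `[0]! = 1`. -/
def qfact : ℕ → K
  | 0 => 1
  | n + 1 => qfact n * qint (n + 1)

/-- The PBW basis elements `Δₙ ∈ Uⁱ`: `Δ₀ = 1` and
`[n+1]·Δ_{n+1} = B·Δₙ − (q^{n-1}/(1−q⁻²))·Δ_{n−1}` for `n ≥ 0`, interpreting `Δ₋₁ = 0`. -/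
def Δel : ℕ → Polynomial K
  | 0 => 1
  | 1 => (qint 1)⁻¹ • (Polynomial.X : Polynomial K)
  | n + 2 => (qint (n + 2))⁻¹ •
      (Polynomial.X * Δel (n + 1) - (q ^ n / (1 - q⁻¹ ^ 2)) • Δel n)

/-- Chord diagrams with `f` free chords and `n` tethered chords, encoded as involutions `σ` of
`{1,…,2f+n}` with exactly `n` fixed points: the fixed-point set is the set `T` of tether
points, and the 2-element orbits `{x, σ x}` are the blocks of the perfect matching `M` of
the complement of `T`. -/
def chordDiagrams (f n : ℕ) : Finset (Fin (2 * f + n) → Fin (2 * f + n)) :=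
  Finset.univ.filter fun σ =>
    (∀ x, σ (σ x) = x) ∧ (Finset.univ.filter fun x => σ x = x).card = n

/-- The number of crossings of a chord diagram encoded as an involution `σ`: the number of
pairs of matched blocks `{a<b}`, `{c<d}` with `a < c < b < d` (each such pair counted once,
via `(x, y) = (a, c)`), plus the number of pairs `(p, {a<b})` of a tether point `p` and a
block with `a < p < b` (counted via `(p, a)`). -/
def crossings {N : ℕ} (σ : Fin N → Fin N) : ℕ :=
  (Finset.univ.filter fun p : Fin N × Fin N =>
      σ p.1 ≠ p.1 ∧ σ p.2 ≠ p.2 ∧ p.1 < p.2 ∧ p.2 < σ p.1 ∧ σ p.1 < σ p.2).card +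
  (Finset.univ.filter fun p : Fin N × Fin N =>
      σ p.1 = p.1 ∧ p.2 < p.1 ∧ p.1 < σ p.2).card

/-- `T_{f,n}(q) = Σ_c N(f,n,c)·q^c ∈ ℕ[q]`, where `N(f,n,c)` is the number of chord diagrams
with `f` free chords, `n` tethered chords and `c` crossings. -/
def Tpoly (f n : ℕ) : Polynomial ℕ :=
  ∑ σ ∈ chordDiagrams f n, Polynomial.X ^ crossings σ

/-- `T_{f,n}(q²) ∈ ℚ(q)`: the polynomial `T_{f,n}` evaluated at `q²`. -/
def TpolyK (f n : ℕ) : K := Polynomial.eval₂ (Nat.castRingHom K) (q ^ 2) (Tpoly f n)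


/- ## quantum algebra lemmas -/

lemma q_ne_zero : q ≠ 0 := RatFunc.X_ne_zero

lemma q_pow_ne_one {n : ℕ} (hn : n ≠ 0) : q ^ n ≠ 1 := by
  intro h
  rw [q, RatFunc.X, ← map_pow, ← map_one (algebraMap (Polynomial ℚ) K)] at h
  have := RatFunc.algebraMap_injective ℚ h
  have h2 := congrArg Polynomial.natDegree this
  simp [Polynomial.natDegree_X_pow] at h2
  exact hn h2

lemma q_sub_inv_ne_zero : q - q⁻¹ ≠ 0 := by
  intro h
  have h1 : q * q = 1 := by
    have := sub_eq_zero.mp h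
    field_simp [q_ne_zero] at this ⊢
    linear_combination this
  have : q ^ 2 = 1 := by rw [pow_two]; exact h1
  exact q_pow_ne_one two_ne_zero this

lemma one_sub_qinv_sq_ne_zero : (1 : K) - q⁻¹ ^ 2 ≠ 0 := by
  intro h
  have h1 : q⁻¹ ^ 2 = 1 := by linear_combination -h
  rw [inv_pow, inv_eq_one] at h1
  exact q_pow_ne_one two_ne_zero h1

lemma qint_ne_zero {n : ℕ} (hn : n ≠ 0) : qint n ≠ 0 := by
  intro h
  rw [qint, div_eq_zero_iff] at h
  rcases h with h | h
  · have : q ^ n * q ^ n = 1 := by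
      have := sub_eq_zero.mp h
      field_simp [q_ne_zero] at this
      nth_rewrite 1 [this]
      rw [← mul_pow, one_div, inv_mul_cancel₀ q_ne_zero, one_pow]
    rw [← pow_add] at this
    exact q_pow_ne_one (by omega) this
  · exact q_sub_inv_ne_zero h

lemma qfact_ne_zero (n : ℕ) : qfact n ≠ 0 := by
  induction n with
  | zero => simp [qfact]
  | succ n ih => exact mul_ne_zero ih (qint_ne_zero n.succ_ne_zero)

lemma q_pow_mul_qint (n : ℕ) :
    q ^ n * qint (n + 1) = ∑ j ∈ Finset.range (n + 1), (q ^ 2) ^ j := by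
  have hg := geom_sum_mul (q ^ 2) (n + 1)
  rw [qint, mul_div_assoc', div_eq_iff q_sub_inv_ne_zero]
  have hq : q ≠ 0 := q_ne_zero
  field_simp
  rw [hg, ← pow_succ, mul_sub, ← mul_pow q (1 / q), mul_one_div_cancel hq, one_pow]
  ring

/- ## Delta element lemmas -/

lemma X_mul_Δel_zero : Polynomial.X * Δel 0 = qint 1 • Δel 1 := by
  show Polynomial.X * 1 = qint 1 • ((qint 1)⁻¹ • (Polynomial.X : Polynomial K))
  rw [smul_smul, mul_inv_cancel₀ (qint_ne_zero one_ne_zero), one_smul, mul_one]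

lemma X_mul_Δel (n : ℕ) : Polynomial.X * Δel (n + 1) =
    qint (n + 2) • Δel (n + 2) + (q ^ n / (1 - q⁻¹ ^ 2)) • Δel n := by
  show Polynomial.X * Δel (n+1) = qint (n+2) • ((qint (n + 2))⁻¹ •
      (Polynomial.X * Δel (n + 1) - (q ^ n / (1 - q⁻¹ ^ 2)) • Δel n)) + _
  rw [smul_smul, mul_inv_cancel₀ (qint_ne_zero (by omega)), one_smul]
  ring

lemma Δel_coeff (n : ℕ) :
    (∀ k, n < k → (Δel n).coeff k = 0) ∧ (Δel n).coeff n = (qfact n)⁻¹ := by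
  induction n using Nat.strong_induction_on with
  | _ n ih =>
    match n with
    | 0 =>
      constructor
      · intro k hk
        show (1 : Polynomial K).coeff k = 0
        rw [Polynomial.coeff_one, if_neg (by omega)]
      · show (1 : Polynomial K).coeff 0 = (qfact 0)⁻¹
        rw [Polynomial.coeff_one, if_pos rfl]
        show (1 : K) = (1 : K)⁻¹
        rw [inv_one]
    | 1 =>
      constructor
      · intro k hk
        show ((qint 1)⁻¹ • (Polynomial.X : Polynomial K)).coeff k = 0
        rw [Polynomial.coeff_smul, Polynomial.coeff_X, if_neg (by omega), smul_zero]
      · show ((qint 1)⁻¹ • (Polynomial.X : Polynomial K)).coeff 1 = (qfact 1)⁻¹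
        rw [Polynomial.coeff_smul, Polynomial.coeff_X, if_pos rfl]
        show (qint 1)⁻¹ * 1 = (qfact 0 * qint 1)⁻¹
        show (qint 1)⁻¹ * 1 = ((1 : K) * qint 1)⁻¹
        rw [mul_one, one_mul]
    | (m+2) =>
      obtain ⟨h1z, h1c⟩ := ih (m+1) (by omega)
      obtain ⟨h0z, h0c⟩ := ih m (by omega)
      have hcoeff : ∀ k, (Δel (m+2)).coeff k = (qint (m+2))⁻¹ *
          ((Polynomial.X * Δel (m+1)).coeff k - (q ^ m / (1 - q⁻¹ ^ 2)) * (Δel m).coeff k) := by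
        intro k
        show ((qint (m + 2))⁻¹ • (Polynomial.X * Δel (m + 1)
          - (q ^ m / (1 - q⁻¹ ^ 2)) • Δel m)).coeff k = _
        rw [Polynomial.coeff_smul, Polynomial.coeff_sub, Polynomial.coeff_smul]
        simp [smul_eq_mul]
      constructor
      · intro k hk
        match k, hk with
        | (j+1), hk =>
          rw [hcoeff, Polynomial.coeff_X_mul, h1z j (by omega), h0z (j+1) (by omega)]
          ring
      · rw [hcoeff, Polynomial.coeff_X_mul, h1c, h0z (m+2) (by omega)]
        show (qint (m + 2))⁻¹ * ((qfact (m + 1))⁻¹ - _ * 0) = (qfact (m+1) * qint (m+2))⁻¹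
        rw [mul_inv]
        ring

lemma sum_smul_Δel_eq_zero : ∀ (m : ℕ) (c : ℕ → K),
    (∑ n ∈ Finset.range (m + 1), c n • Δel n) = 0 → ∀ k ≤ m, c k = 0 := by
  intro m
  induction m with
  | zero =>
    intro c hc k hk
    interval_cases k
    simpa [Δel] using hc
  | succ m ih =>
    intro c hc k hk
    have htop : c (m + 1) = 0 := by
      have := congrArg (fun p => Polynomial.coeff p (m + 1)) hc
      simp only [Polynomial.finset_sum_coeff, Polynomial.coeff_smul, Polynomial.coeff_zero,
        smul_eq_mul] at this
      rw [Finset.sum_eq_single (m + 1)] at this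
      · rw [(Δel_coeff (m+1)).2] at this
        have := mul_eq_zero.mp this
        rcases this with h | h
        · exact h
        · exact absurd h (inv_ne_zero (qfact_ne_zero _))
      · intro b hb hbne
        rw [(Δel_coeff b).1 (m+1) (by simp at hb; omega), mul_zero]
      · simp
    rcases Nat.lt_or_ge k (m + 1) with hk' | hk'
    · apply ih c _ k (by omega)
      rw [Finset.sum_range_succ, htop, zero_smul, add_zero] at hc
      exact hc
    · have : k = m + 1 := by omega
      rw [this]; exact htop


/- ## chord diagram combinatorics -/

def S (N n : ℕ) : Finset (Fin N → Fin N) :=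
  Finset.univ.filter fun σ =>
    (∀ x, σ (σ x) = x) ∧ (Finset.univ.filter fun x => σ x = x).card = n

def P (N n : ℕ) : Polynomial ℕ := ∑ σ ∈ S N n, Polynomial.X ^ crossings σ

variable {M : ℕ}

/-- extend by a tether at the last point -/
def extT (τ : Fin M → Fin M) : Fin (M + 1) → Fin (M + 1) :=
  Fin.snoc (fun i => (τ i).castSucc) (Fin.last M)

/-- extend by a chord from `a` to the last point -/
def extM (τ : Fin M → Fin M) (a : Fin M) : Fin (M + 1) → Fin (M + 1) :=
  Fin.snoc (fun i => if i = a then Fin.last M else (τ i).castSucc) a.castSucc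

/-- restriction to the first `M` points (partner of the last point, if any, becomes fixed) -/
def res (σ : Fin (M + 1) → Fin (M + 1)) : Fin M → Fin M := fun i =>
  if h : σ i.castSucc = Fin.last M then i else (σ i.castSucc).castPred h

@[simp] lemma extT_castSucc (τ : Fin M → Fin M) (i : Fin M) :
    extT τ i.castSucc = (τ i).castSucc := Fin.snoc_castSucc _ _ _

@[simp] lemma extT_last (τ : Fin M → Fin M) : extT τ (Fin.last M) = Fin.last M :=
  Fin.snoc_last _ _

lemma extM_castSucc (τ : Fin M → Fin M) (a : Fin M) (i : Fin M) :
    extM τ a i.castSucc = if i = a then Fin.last M else (τ i).castSucc := Fin.snoc_castSucc _ _ _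

@[simp] lemma extM_castSucc_self (τ : Fin M → Fin M) (a : Fin M) :
    extM τ a a.castSucc = Fin.last M := by rw [extM_castSucc, if_pos rfl]

lemma extM_castSucc_ne (τ : Fin M → Fin M) {a i : Fin M} (h : i ≠ a) :
    extM τ a i.castSucc = (τ i).castSucc := by rw [extM_castSucc, if_neg h]

@[simp] lemma extM_last (τ : Fin M → Fin M) (a : Fin M) :
    extM τ a (Fin.last M) = a.castSucc := Fin.snoc_last _ _

lemma res_extT (τ : Fin M → Fin M) : res (extT τ) = τ := by
  funext i
  rw [res, dif_neg (by rw [extT_castSucc]; exact (Fin.castSucc_lt_last _).ne)]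
  simp [Fin.castPred_castSucc]

lemma res_extM (τ : Fin M → Fin M) {a : Fin M} (ha : τ a = a) : res (extM τ a) = τ := by
  funext i
  by_cases h : i = a
  · subst h
    rw [res, dif_pos (extM_castSucc_self τ i), ha]
  · rw [res, dif_neg (by rw [extM_castSucc_ne τ h]; exact (Fin.castSucc_lt_last _).ne)]
    simp [extM_castSucc_ne τ h, Fin.castPred_castSucc]

lemma extT_res (σ : Fin (M + 1) → Fin (M + 1)) (hσ : ∀ x, σ (σ x) = x)
    (hlast : σ (Fin.last M) = Fin.last M) : extT (res σ) = σ := by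
  funext x
  rcases Fin.eq_castSucc_or_eq_last x with ⟨i, rfl⟩ | rfl
  · have hne : σ i.castSucc ≠ Fin.last M := by
      intro h
      have := hσ i.castSucc
      rw [h, hlast] at this
      exact (Fin.castSucc_lt_last i).ne this.symm
    rw [extT_castSucc, res, dif_neg hne, Fin.castSucc_castPred]
  · rw [extT_last, hlast]

lemma extM_res (σ : Fin (M + 1) → Fin (M + 1)) (hσ : ∀ x, σ (σ x) = x)
    (h : σ (Fin.last M) ≠ Fin.last M) : extM (res σ) ((σ (Fin.last M)).castPred h) = σ := by
  funext x
  rcases Fin.eq_castSucc_or_eq_last x with ⟨i, rfl⟩ | rfl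
  · by_cases hi : i = (σ (Fin.last M)).castPred h
    · subst hi
      rw [extM_castSucc, if_pos rfl, Fin.castSucc_castPred, hσ]
    · have hne : σ i.castSucc ≠ Fin.last M := by
        intro hcon
        apply hi
        have hthis := hσ i.castSucc
        rw [hcon] at hthis
        rw [← Fin.castSucc_inj, Fin.castSucc_castPred]
        exact hthis.symm
      rw [extM_castSucc, if_neg hi, res, dif_neg hne, Fin.castSucc_castPred]
  · rw [extM_last, Fin.castSucc_castPred]

lemma extT_invol {τ : Fin M → Fin M} (hτ : ∀ x, τ (τ x) = x) :
    ∀ x, extT τ (extT τ x) = x := by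
  intro x
  rcases Fin.eq_castSucc_or_eq_last x with ⟨i, rfl⟩ | rfl
  · rw [extT_castSucc, extT_castSucc, hτ]
  · rw [extT_last, extT_last]

lemma extM_invol {τ : Fin M → Fin M} (hτ : ∀ x, τ (τ x) = x) {a : Fin M} (ha : τ a = a) :
    ∀ x, extM τ a (extM τ a x) = x := by
  intro x
  rcases Fin.eq_castSucc_or_eq_last x with ⟨i, rfl⟩ | rfl
  · by_cases hi : i = a
    · subst hi
      rw [extM_castSucc_self, extM_last]
    · rw [extM_castSucc_ne τ hi, extM_castSucc]
      have : τ i ≠ a := by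
        intro h
        apply hi
        rw [← hτ i, h, ha]
      rw [if_neg this, hτ]
  · rw [extM_last, extM_castSucc_self]

lemma res_eq_of_eq_last (σ : Fin (M + 1) → Fin (M + 1)) {i : Fin M}
    (h : σ i.castSucc = Fin.last M) : res σ i = i := dif_pos h

lemma castSucc_res (σ : Fin (M + 1) → Fin (M + 1)) {i : Fin M}
    (h : σ i.castSucc ≠ Fin.last M) : (res σ i).castSucc = σ i.castSucc := by
  rw [res, dif_neg h, Fin.castSucc_castPred]

lemma res_invol {σ : Fin (M + 1) → Fin (M + 1)} (hσ : ∀ x, σ (σ x) = x) :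
    ∀ i, res σ (res σ i) = i := by
  intro i
  by_cases h : σ i.castSucc = Fin.last M
  · rw [res_eq_of_eq_last σ h, res_eq_of_eq_last σ h]
  · have h2 : σ (res σ i).castSucc = i.castSucc := by rw [castSucc_res σ h, hσ]
    have h3 : σ (res σ i).castSucc ≠ Fin.last M := by
      rw [h2]; exact (Fin.castSucc_lt_last i).ne
    rw [← Fin.castSucc_inj, castSucc_res σ h3, h2]

/-- counting fixed points through `castSucc`/`last` decomposition -/
lemma card_filter_fin_succ (Q : Fin (M + 1) → Prop) [DecidablePred Q] :
    (Finset.univ.filter Q).card =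
      (Finset.univ.filter fun i : Fin M => Q i.castSucc).card + if Q (Fin.last M) then 1 else 0 := by
  rw [Finset.card_filter, Finset.card_filter, Fin.sum_univ_castSucc]

lemma fixcard_extT (τ : Fin M → Fin M) :
    (Finset.univ.filter fun x => extT τ x = x).card =
      (Finset.univ.filter fun x => τ x = x).card + 1 := by
  have h1 : (Finset.univ.filter fun i : Fin M => extT τ i.castSucc = i.castSucc) =
      Finset.univ.filter fun i => τ i = i := by
    apply Finset.filter_congr
    intro i _
    rw [extT_castSucc, Fin.castSucc_inj]
  rw [card_filter_fin_succ, h1, if_pos (extT_last τ)]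

lemma fixcard_extM (τ : Fin M → Fin M) {a : Fin M} (ha : τ a = a) :
    (Finset.univ.filter fun x => extM τ a x = x).card + 1 =
      (Finset.univ.filter fun x => τ x = x).card := by
  have h1 : (Finset.univ.filter fun i : Fin M => extM τ a i.castSucc = i.castSucc) =
      (Finset.univ.filter fun i => τ i = i).erase a := by
    ext i
    simp only [Finset.mem_filter, Finset.mem_erase, Finset.mem_univ, true_and]
    constructor
    · intro h
      have hia : i ≠ a := by
        intro hcon
        subst hcon
        rw [extM_castSucc_self] at h
        exact (Fin.castSucc_lt_last i).ne h.symm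
      rw [extM_castSucc_ne τ hia, Fin.castSucc_inj] at h
      exact ⟨hia, h⟩
    · intro ⟨hia, h⟩
      rw [extM_castSucc_ne τ hia, h]
  have hmem : a ∈ Finset.univ.filter fun i => τ i = i := by
    simp [ha]
  rw [card_filter_fin_succ, h1,
    if_neg (by rw [extM_last]; exact (Fin.castSucc_lt_last a).ne), add_zero,
    Finset.card_erase_add_one hmem]



lemma not_last_lt (y : Fin (M + 1)) : ¬ (Fin.last M < y) := not_lt.mpr (Fin.le_last y)

lemma crossings_extT (τ : Fin M → Fin M) : crossings (extT τ) = crossings τ := by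
  unfold crossings
  simp only [Finset.card_filter, Fintype.sum_prod_type, Fin.sum_univ_castSucc,
    extT_castSucc, extT_last, ne_eq, Fin.castSucc_inj, Fin.castSucc_lt_castSucc_iff,
    lt_self_iff_false, Fin.castSucc_lt_last, not_last_lt, not_true, not_false_iff,
    false_and, and_false, true_and, and_true, if_false, Finset.sum_const_zero, add_zero,
    if_true]

lemma castSucc_ne_last' (i : Fin M) : ¬(i.castSucc = Fin.last M) := (Fin.castSucc_lt_last i).ne

lemma sum_ite_eq_and {c : Prop} [Decidable c] (a : Fin M) :
    ∑ j : Fin M, (if (j = a ∧ c) then 1 else 0) = if c then 1 else 0 := by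
  by_cases hc : c <;> simp [hc]

lemma sum_sum_ite_fst (R : Fin M → Prop) [DecidablePred R] (a : Fin M) :
    ∑ i : Fin M, ∑ j : Fin M, (if (i = a ∧ R j) then 1 else 0)
      = ∑ j : Fin M, if R j then 1 else 0 := by
  rw [Finset.sum_comm]
  exact Finset.sum_congr rfl fun j _ => sum_ite_eq_and a

lemma crossings_extM (τ : Fin M → Fin M) {a : Fin M} (ha : τ a = a) :
    crossings (extM τ a) = crossings τ +
      (Finset.univ.filter fun p => τ p = p ∧ a < p).card := by
  have key1 : ∀ i j : Fin M,
      (if (extM τ a i.castSucc ≠ i.castSucc ∧ extM τ a j.castSucc ≠ j.castSucc ∧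
          i.castSucc < j.castSucc ∧ j.castSucc < extM τ a i.castSucc ∧
          extM τ a i.castSucc < extM τ a j.castSucc) then 1 else 0) =
        (if (τ i ≠ i ∧ τ j ≠ j ∧ i < j ∧ j < τ i ∧ τ i < τ j) then 1 else 0) +
        (if (j = a ∧ i < a ∧ a < τ i) then 1 else 0) := by
    intro i j
    have b1 := (τ i).isLt; have b2 := (τ j).isLt; have b3 := i.isLt
    have b4 := j.isLt; have b5 := a.isLt
    by_cases hia : i = a <;> by_cases hja : j = a
    · subst hia; subst hja
      simp only [extM_castSucc_self]
      split_ifs <;> first | rfl |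
        (exfalso; simp only [Fin.lt_def, Fin.ext_iff, Fin.coe_castSucc, Fin.val_last,
          ne_eq, true_and, and_true, not_true, false_and, and_false, not_false_eq_true] at * <;> omega)
    · subst hia
      simp only [extM_castSucc_self, extM_castSucc_ne τ hja]
      split_ifs <;> first | rfl |
        (exfalso; simp only [Fin.lt_def, Fin.ext_iff, Fin.coe_castSucc, Fin.val_last,
          ne_eq, true_and, and_true, not_true, false_and, and_false, not_false_eq_true] at * <;> omega)
    · subst hja
      simp only [extM_castSucc_self, extM_castSucc_ne τ hia]
      split_ifs <;> first | rfl |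
        (exfalso; simp only [Fin.lt_def, Fin.ext_iff, Fin.coe_castSucc, Fin.val_last,
          ne_eq, true_and, and_true, not_true, false_and, and_false, not_false_eq_true] at * <;> omega)
    · simp only [extM_castSucc_ne τ hia, extM_castSucc_ne τ hja]
      split_ifs <;> first | rfl |
        (exfalso; simp only [Fin.lt_def, Fin.ext_iff, Fin.coe_castSucc, Fin.val_last,
          ne_eq, true_and, and_true, not_true, false_and, and_false, not_false_eq_true] at * <;> omega)
  have key2 : ∀ i j : Fin M,
      (if (extM τ a i.castSucc = i.castSucc ∧ j.castSucc < i.castSucc ∧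
          i.castSucc < extM τ a j.castSucc) then 1 else 0) =
        (if ((τ i = i ∧ j < i ∧ i < τ j) ∧ i ≠ a) then 1 else 0) +
        (if (j = a ∧ τ i = i ∧ a < i) then 1 else 0) := by
    intro i j
    have b1 := (τ i).isLt; have b2 := (τ j).isLt; have b3 := i.isLt
    have b4 := j.isLt; have b5 := a.isLt
    by_cases hia : i = a <;> by_cases hja : j = a
    · subst hia; subst hja
      simp only [extM_castSucc_self]
      split_ifs <;> first | rfl |
        (exfalso; simp only [Fin.lt_def, Fin.ext_iff, Fin.coe_castSucc, Fin.val_last,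
          ne_eq, true_and, and_true, not_true, false_and, and_false, not_false_eq_true] at * <;> omega)
    · subst hia
      simp only [extM_castSucc_self, extM_castSucc_ne τ hja]
      split_ifs <;> first | rfl |
        (exfalso; simp only [Fin.lt_def, Fin.ext_iff, Fin.coe_castSucc, Fin.val_last,
          ne_eq, true_and, and_true, not_true, false_and, and_false, not_false_eq_true] at * <;> omega)
    · subst hja
      simp only [extM_castSucc_self, extM_castSucc_ne τ hia]
      split_ifs <;> first | rfl |
        (exfalso; simp only [Fin.lt_def, Fin.ext_iff, Fin.coe_castSucc, Fin.val_last,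
          ne_eq, true_and, and_true, not_true, false_and, and_false, not_false_eq_true] at * <;> omega)
    · simp only [extM_castSucc_ne τ hia, extM_castSucc_ne τ hja]
      split_ifs <;> first | rfl |
        (exfalso; simp only [Fin.lt_def, Fin.ext_iff, Fin.coe_castSucc, Fin.val_last,
          ne_eq, true_and, and_true, not_true, false_and, and_false, not_false_eq_true] at * <;> omega)
  have key3 : ∀ i j : Fin M,
      (if (τ i = i ∧ j < i ∧ i < τ j) then 1 else 0) =
        (if ((τ i = i ∧ j < i ∧ i < τ j) ∧ i ≠ a) then 1 else 0) +
        (if (i = a ∧ j < a ∧ a < τ j) then 1 else 0) := by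
    intro i j
    have b1 := (τ i).isLt; have b2 := (τ j).isLt; have b3 := i.isLt
    have b4 := j.isLt; have b5 := a.isLt
    by_cases hia : i = a
    · subst hia
      split_ifs <;> first | rfl |
        (exfalso; simp only [Fin.lt_def, Fin.ext_iff, ne_eq, true_and, and_true, not_true, false_and, and_false, not_false_eq_true] at * <;> omega)
    · split_ifs <;> first | rfl |
        (exfalso; simp only [Fin.lt_def, Fin.ext_iff, ne_eq, true_and, and_true, not_true, false_and, and_false, not_false_eq_true] at * <;> omega)
  unfold crossings
  simp only [Finset.card_filter, Fintype.sum_prod_type, Fin.sum_univ_castSucc]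
  simp only [extM_last, castSucc_ne_last', not_last_lt, ne_eq, lt_self_iff_false,
    not_true, not_false_iff, false_and, and_false, true_and, and_true, if_false, if_true,
    Finset.sum_const_zero, add_zero]
  have e1 : ∑ i : Fin M, ∑ j : Fin M,
      (if (extM τ a i.castSucc ≠ i.castSucc ∧ extM τ a j.castSucc ≠ j.castSucc ∧
          i.castSucc < j.castSucc ∧ j.castSucc < extM τ a i.castSucc ∧
          extM τ a i.castSucc < extM τ a j.castSucc) then 1 else 0) =
      (∑ i : Fin M, ∑ j : Fin M,
        (if (τ i ≠ i ∧ τ j ≠ j ∧ i < j ∧ j < τ i ∧ τ i < τ j) then 1 else 0)) +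
      ∑ i : Fin M, (if (i < a ∧ a < τ i) then 1 else 0) := by
    simp only [key1, Finset.sum_add_distrib]
    congr 1
    exact Finset.sum_congr rfl fun i _ => sum_ite_eq_and a
  have e2 : ∑ i : Fin M, ∑ j : Fin M,
      (if (extM τ a i.castSucc = i.castSucc ∧ j.castSucc < i.castSucc ∧
          i.castSucc < extM τ a j.castSucc) then 1 else 0) =
      (∑ i : Fin M, ∑ j : Fin M,
        (if ((τ i = i ∧ j < i ∧ i < τ j) ∧ i ≠ a) then 1 else 0)) +
      ∑ i : Fin M, (if (τ i = i ∧ a < i) then 1 else 0) := by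
    simp only [key2, Finset.sum_add_distrib]
    congr 1
    exact Finset.sum_congr rfl fun i _ => sum_ite_eq_and a
  have e3 : ∑ i : Fin M, ∑ j : Fin M,
      (if (τ i = i ∧ j < i ∧ i < τ j) then 1 else 0) =
      (∑ i : Fin M, ∑ j : Fin M,
        (if ((τ i = i ∧ j < i ∧ i < τ j) ∧ i ≠ a) then 1 else 0)) +
      ∑ j : Fin M, (if (j < a ∧ a < τ j) then 1 else 0) := by
    simp only [key3, Finset.sum_add_distrib]
    congr 1
    exact sum_sum_ite_fst _ a
  rw [e1, e2, e3]
  ring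

lemma mem_S_iff {N n : ℕ} {σ : Fin N → Fin N} :
    σ ∈ S N n ↔ (∀ x, σ (σ x) = x) ∧ (Finset.univ.filter fun x => σ x = x).card = n := by
  simp [S]

lemma extT_mem {n : ℕ} {τ : Fin M → Fin M} (h : τ ∈ S M n) : extT τ ∈ S (M + 1) (n + 1) := by
  rw [mem_S_iff] at h ⊢
  exact ⟨extT_invol h.1, by rw [fixcard_extT, h.2]⟩

lemma extM_mem {n : ℕ} {τ : Fin M → Fin M} (h : τ ∈ S M (n + 1)) {a : Fin M} (ha : τ a = a) :
    extM τ a ∈ S (M + 1) n := by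
  rw [mem_S_iff] at h ⊢
  refine ⟨extM_invol h.1 ha, ?_⟩
  have := fixcard_extM τ ha
  rw [h.2] at this
  omega

lemma res_mem_T {n : ℕ} {σ : Fin (M + 1) → Fin (M + 1)} (h : σ ∈ S (M + 1) (n + 1))
    (hl : σ (Fin.last M) = Fin.last M) : res σ ∈ S M n := by
  rw [mem_S_iff] at h ⊢
  refine ⟨res_invol h.1, ?_⟩
  have h2 := fixcard_extT (res σ)
  rw [extT_res σ h.1 hl, h.2] at h2
  omega

lemma res_fixed {σ : Fin (M + 1) → Fin (M + 1)} (hσ : ∀ x, σ (σ x) = x)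
    (hl : σ (Fin.last M) ≠ Fin.last M) :
    res σ ((σ (Fin.last M)).castPred hl) = (σ (Fin.last M)).castPred hl := by
  apply res_eq_of_eq_last
  rw [Fin.castSucc_castPred, hσ]

lemma res_mem_M {n : ℕ} {σ : Fin (M + 1) → Fin (M + 1)} (h : σ ∈ S (M + 1) n)
    (hl : σ (Fin.last M) ≠ Fin.last M) : res σ ∈ S M (n + 1) := by
  rw [mem_S_iff] at h ⊢
  refine ⟨res_invol h.1, ?_⟩
  have h2 := fixcard_extM (res σ) (res_fixed h.1 hl)
  rw [extM_res σ h.1 hl, h.2] at h2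
  omega

/-- order statistics: summing any function of the number of elements above `a` over `a ∈ s`
gives the sum over `range s.card`. -/
lemma sum_orderstat {α β : Type*} [LinearOrder α] [DecidableEq α] [AddCommMonoid β]
    (s : Finset α) (F : ℕ → β) :
    ∑ a ∈ s, F ((s.filter fun p => a < p).card) = ∑ j ∈ Finset.range s.card, F j := by
  set g : α → ℕ := fun a => (s.filter fun p => a < p).card with hg
  have hinj : ∀ x ∈ s, ∀ y ∈ s, g x = g y → x = y := by
    have hanti : ∀ x ∈ s, ∀ y ∈ s, x < y → g y < g x := by
      intro x hx y hy hxy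
      apply Finset.card_lt_card
      rw [Finset.ssubset_def]
      constructor
      · intro z hz
        rw [Finset.mem_filter] at hz ⊢
        exact ⟨hz.1, lt_trans hxy hz.2⟩
      · intro hcon
        have hmem : y ∈ s.filter (fun p => y < p) := hcon (Finset.mem_filter.mpr ⟨hy, hxy⟩)
        exact absurd (Finset.mem_filter.mp hmem).2 (lt_irrefl y)
    intro x hx y hy hxy
    rcases lt_trichotomy x y with h | h | h
    · exact absurd hxy (by have := hanti x hx y hy h; omega)
    · exact h
    · exact absurd hxy (by have := hanti y hy x hx h; omega)
  have himg : s.image g = Finset.range s.card := by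
    apply Finset.eq_of_subset_of_card_le
    · intro j hj
      rw [Finset.mem_image] at hj
      obtain ⟨x, hx, rfl⟩ := hj
      rw [Finset.mem_range]
      have hsub : s.filter (fun p => x < p) ⊆ s.erase x := by
        intro z hz
        rw [Finset.mem_filter] at hz
        exact Finset.mem_erase.mpr ⟨hz.2.ne', hz.1⟩
      have h1 : g x ≤ (s.erase x).card := Finset.card_le_card hsub
      have h2 : (s.erase x).card = s.card - 1 := Finset.card_erase_of_mem hx
      have h3 : 1 ≤ s.card := Finset.card_pos.mpr ⟨x, hx⟩
      omega
    · rw [Finset.card_range, Finset.card_image_of_injOn (fun x hx y hy => hinj x hx y hy)]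
  calc ∑ a ∈ s, F (g a) = ∑ j ∈ s.image g, F j := (Finset.sum_image hinj).symm
  _ = ∑ j ∈ Finset.range s.card, F j := by rw [himg]

lemma P_zero_of_lt {N n : ℕ} (h : N < n) : P N n = 0 := by
  rw [P]
  convert Finset.sum_empty
  rw [Finset.eq_empty_iff_forall_notMem]
  intro σ hσ
  rw [mem_S_iff] at hσ
  have h1 : (Finset.univ.filter fun x => σ x = x).card ≤ N := by
    have := Finset.card_filter_le (Finset.univ : Finset (Fin N)) (fun x => σ x = x)
    simpa using this
  omega

lemma P_diag (N : ℕ) : P N N = 1 := by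
  have hS : S N N = {fun x => x} := by
    ext σ
    rw [mem_S_iff, Finset.mem_singleton]
    constructor
    · intro ⟨h1, h2⟩
      have hall : (Finset.univ.filter fun x => σ x = x) = Finset.univ := by
        apply Finset.eq_of_subset_of_card_le (Finset.filter_subset _ _)
        simp [h2]
      funext x
      have : x ∈ Finset.univ.filter fun x => σ x = x := by
        rw [hall]; exact Finset.mem_univ x
      exact (Finset.mem_filter.mp this).2
    · rintro rfl
      refine ⟨fun x => rfl, ?_⟩
      simp
  rw [P, hS, Finset.sum_singleton]
  have hc : crossings (fun x : Fin N => x) = 0 := by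
    unfold crossings
    have e1 : ∀ p : Fin N × Fin N, ¬((fun x : Fin N => x) p.1 ≠ p.1 ∧
        (fun x : Fin N => x) p.2 ≠ p.2 ∧ p.1 < p.2 ∧ p.2 < (fun x : Fin N => x) p.1 ∧
        (fun x : Fin N => x) p.1 < (fun x : Fin N => x) p.2) := fun p h => h.1 rfl
    have e2 : ∀ p : Fin N × Fin N, ¬((fun x : Fin N => x) p.1 = p.1 ∧ p.2 < p.1 ∧
        p.1 < (fun x : Fin N => x) p.2) :=
      fun p h => absurd (lt_trans h.2.1 h.2.2) (lt_irrefl _)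
    rw [Finset.filter_false_of_mem (fun p _ => e1 p),
      Finset.filter_false_of_mem (fun p _ => e2 p), Finset.card_empty]
  rw [hc, pow_zero]

lemma P_succ (M n : ℕ) : P (M + 1) n =
    (if n = 0 then 0 else P M (n - 1)) +
      (∑ j ∈ Finset.range (n + 1), (Polynomial.X : Polynomial ℕ) ^ j) * P M (n + 1) := by
  rw [P, ← Finset.sum_filter_add_sum_filter_not (S (M + 1) n)
    (fun σ => σ (Fin.last M) = Fin.last M)]
  congr 1
  · -- tether part
    cases n with
    | zero =>
      rw [if_pos rfl]
      apply Finset.sum_eq_zero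
      intro σ hσ
      rw [Finset.mem_filter] at hσ
      obtain ⟨hS, hl⟩ := hσ
      rw [mem_S_iff] at hS
      exfalso
      have : Fin.last M ∈ Finset.univ.filter fun x => σ x = x := by
        simp [hl]
      rw [Finset.card_eq_zero.mp hS.2] at this
      exact absurd this (Finset.notMem_empty _)
    | succ k =>
      rw [if_neg (Nat.succ_ne_zero k)]
      show _ = ∑ τ ∈ S M k, Polynomial.X ^ crossings τ
      apply Finset.sum_bij' (fun σ hσ => res σ) (fun τ hτ => extT τ)
      · intro σ hσ
        rw [Finset.mem_filter] at hσ
        exact res_mem_T hσ.1 hσ.2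
      · intro τ hτ
        rw [Finset.mem_filter]
        exact ⟨extT_mem hτ, extT_last τ⟩
      · intro σ hσ
        rw [Finset.mem_filter, mem_S_iff] at hσ
        exact extT_res σ hσ.1.1 hσ.2
      · intro τ hτ
        exact res_extT τ
      · intro σ hσ
        rw [Finset.mem_filter, mem_S_iff] at hσ
        conv_lhs => rw [← extT_res σ hσ.1.1 hσ.2, crossings_extT]
  · -- matched part
    have hrhs : (∑ j ∈ Finset.range (n + 1), (Polynomial.X : Polynomial ℕ) ^ j) * P M (n + 1) =
        ∑ τ ∈ S M (n + 1), ∑ a ∈ Finset.univ.filter (fun x => τ x = x),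
          Polynomial.X ^ (crossings τ + (Finset.univ.filter fun p => τ p = p ∧ a < p).card) := by
      rw [P, Finset.mul_sum]
      apply Finset.sum_congr rfl
      intro τ hτ
      have hfix : (Finset.univ.filter fun x => τ x = x).card = n + 1 := (mem_S_iff.mp hτ).2
      have hfilter : ∀ a : Fin M, (Finset.univ.filter fun p => τ p = p ∧ a < p) =
          (Finset.univ.filter fun x => τ x = x).filter (fun p => a < p) := by
        intro a
        rw [Finset.filter_filter]
      calc (∑ j ∈ Finset.range (n + 1), (Polynomial.X : Polynomial ℕ) ^ j) *
            Polynomial.X ^ crossings τ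
          = ∑ j ∈ Finset.range (n + 1), Polynomial.X ^ (crossings τ + j) := by
            rw [Finset.sum_mul]
            apply Finset.sum_congr rfl
            intro j _
            rw [← pow_add, add_comm]
        _ = ∑ a ∈ Finset.univ.filter (fun x => τ x = x),
              Polynomial.X ^ (crossings τ +
                ((Finset.univ.filter fun x => τ x = x).filter (fun p => a < p)).card) := by
            rw [← hfix, ← sum_orderstat (Finset.univ.filter fun x => τ x = x)
              (fun j => Polynomial.X ^ (crossings τ + j))]
        _ = _ := by
            apply Finset.sum_congr rfl
            intro a _
            rw [hfilter]
    rw [hrhs, ← Finset.sum_sigma (S M (n + 1))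
      (fun τ => Finset.univ.filter (fun x => τ x = x))
      (fun p => Polynomial.X ^ (crossings p.1 +
        (Finset.univ.filter fun q => p.1 q = q ∧ p.2 < q).card))]
    refine Finset.sum_bij'
      (fun σ hσ => (⟨res σ, (σ (Fin.last M)).castPred (by
        rw [Finset.mem_filter] at hσ; exact hσ.2)⟩ :
        Σ _ : Fin M → Fin M, Fin M))
      (fun p hp => extM p.1 p.2) ?_ ?_ ?_ ?_ ?_
    · intro σ hσ
      rw [Finset.mem_filter] at hσ
      rw [Finset.mem_sigma]
      refine ⟨res_mem_M hσ.1 hσ.2, ?_⟩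
      rw [Finset.mem_filter]
      exact ⟨Finset.mem_univ _, res_fixed (mem_S_iff.mp hσ.1).1 hσ.2⟩
    · intro p hp
      rw [Finset.mem_sigma] at hp
      obtain ⟨hp1, hp2⟩ := hp
      rw [Finset.mem_filter] at hp2 ⊢
      constructor
      · exact extM_mem hp1 hp2.2
      · show ¬extM p.fst p.snd (Fin.last M) = Fin.last M
        rw [extM_last]
        exact (Fin.castSucc_lt_last _).ne
    · intro σ hσ
      rw [Finset.mem_filter] at hσ
      exact extM_res σ (mem_S_iff.mp hσ.1).1 hσ.2
    · intro p hp
      rw [Finset.mem_sigma] at hp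
      obtain ⟨hp1, hp2⟩ := hp
      rw [Finset.mem_filter] at hp2
      have h1 : res (extM p.1 p.2) = p.1 := res_extM p.1 hp2.2
      have h2 : ∀ hne, (extM p.1 p.2 (Fin.last M)).castPred hne = p.2 := by
        intro hne
        rw [← Fin.castSucc_inj, Fin.castSucc_castPred, extM_last]
      refine Sigma.ext ?_ ?_
      · show res (extM p.fst p.snd) = p.fst
        exact h1
      · have hne : extM p.fst p.snd (Fin.last M) ≠ Fin.last M := by
          rw [extM_last]; exact (Fin.castSucc_lt_last _).ne
        show HEq ((extM p.fst p.snd (Fin.last M)).castPred hne) p.snd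
        exact heq_of_eq (h2 hne)
    · intro σ hσ
      rw [Finset.mem_filter] at hσ
      have hinv := (mem_S_iff.mp hσ.1).1
      have hfix := res_fixed hinv hσ.2
      conv_lhs => rw [← extM_res σ hinv hσ.2, crossings_extM (res σ) hfix]

/- ## main proof -/

/- ## the candidate coefficients and their recurrence -/

def evalK : Polynomial ℕ →+* K := Polynomial.eval₂RingHom (Nat.castRingHom K) (q ^ 2)

lemma TpolyK_eq (f n : ℕ) : TpolyK f n = evalK (P (2 * f + n) n) := rfl

lemma qint_zero : qint 0 = 0 := by simp [qint]

lemma qint_one : qint 1 = 1 := by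
  rw [qint, pow_one, pow_one, div_self q_sub_inv_ne_zero]

lemma qfact_one : qfact 1 = 1 := by
  show qfact 0 * qint 1 = 1
  rw [qint_one]
  show (1 : K) * 1 = 1
  rw [one_mul]

lemma evalK_geom (n : ℕ) :
    evalK (∑ j ∈ Finset.range (n + 1), (Polynomial.X : Polynomial ℕ) ^ j) =
      q ^ n * qint (n + 1) := by
  rw [map_sum, q_pow_mul_qint]
  apply Finset.sum_congr rfl
  intro j _
  rw [map_pow]
  congr 1
  exact Polynomial.eval₂_X _ _

lemma TpolyK_diag (n : ℕ) : TpolyK 0 n = 1 := by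
  rw [TpolyK_eq, show 2 * 0 + n = n from by omega, P_diag, map_one]

def wcand (m n : ℕ) : K :=
  if n ≤ m ∧ (m - n) % 2 = 0 then
    qfact n * TpolyK ((m - n) / 2) n / (1 - q⁻¹ ^ 2) ^ ((m - n) / 2)
  else 0

lemma wcand_zero_of_lt {m n : ℕ} (h : m < n) : wcand m n = 0 := by
  unfold wcand
  rw [if_neg (by omega)]

lemma wcand_eq {m n f : ℕ} (h : m = n + 2 * f) :
    wcand m n = qfact n * TpolyK f n / (1 - q⁻¹ ^ 2) ^ f := by
  unfold wcand
  rw [if_pos (by omega), show (m - n) / 2 = f from by omega]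

lemma wcand_diag (m : ℕ) : wcand m m = qfact m := by
  rw [wcand_eq (f := 0) (by omega), TpolyK_diag, pow_zero, div_one, mul_one]

lemma wcand_rec (m n : ℕ) :
    wcand (m + 1) n = qint n * wcand m (n - 1) +
      (q ^ n / (1 - q⁻¹ ^ 2)) * wcand m (n + 1) := by
  have hD : (1 : K) - q⁻¹ ^ 2 ≠ 0 := one_sub_qinv_sq_ne_zero
  by_cases h1 : n ≤ m + 1
  swap
  · rw [wcand_zero_of_lt (by omega), wcand_zero_of_lt (by omega),
      wcand_zero_of_lt (by omega), mul_zero, mul_zero, add_zero]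
  by_cases h2 : (m + 1 - n) % 2 = 0
  swap
  · have hLHS : wcand (m + 1) n = 0 := by unfold wcand; rw [if_neg (by omega)]
    rw [hLHS]
    rcases Nat.eq_zero_or_pos n with hn | hn
    · subst hn
      rw [qint_zero, zero_mul, zero_add]
      have h3 : wcand m 1 = 0 := by unfold wcand; rw [if_neg (by omega)]
      rw [h3, mul_zero]
    · have e1 : wcand m (n - 1) = 0 := by unfold wcand; rw [if_neg (by omega)]
      have e2 : wcand m (n + 1) = 0 := by unfold wcand; rw [if_neg (by omega)]
      rw [e1, e2, mul_zero, mul_zero, add_zero]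
  by_cases h3 : n = m + 1
  · subst h3
    rw [wcand_diag, show m + 1 - 1 = m from by omega, wcand_diag,
      wcand_zero_of_lt (by omega), mul_zero, add_zero]
    show qfact m * qint (m + 1) = _
    ring
  · have hf1 : 1 ≤ (m + 1 - n) / 2 := by omega
    set f := (m + 1 - n) / 2 with hfdef
    have hm : m + 1 = n + 2 * f := by omega
    have hps := congrArg evalK (P_succ m n)
    rw [map_add, map_mul, apply_ite evalK, map_zero, evalK_geom] at hps
    have hTn : TpolyK f n = evalK (P (m + 1) n) := by
      rw [TpolyK_eq, show 2 * f + n = m + 1 from by omega]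
    have hTn1 : TpolyK (f - 1) (n + 1) = evalK (P m (n + 1)) := by
      rw [TpolyK_eq, show 2 * (f - 1) + (n + 1) = m from by omega]
    have hpow : ((1 : K) - q⁻¹ ^ 2) ^ f = (1 - q⁻¹ ^ 2) ^ (f - 1) * (1 - q⁻¹ ^ 2) := by
      rw [← pow_succ, show f - 1 + 1 = f from by omega]
    have hpne : ((1 : K) - q⁻¹ ^ 2) ^ (f - 1) ≠ 0 := pow_ne_zero _ hD
    rcases Nat.eq_zero_or_pos n with hn | hn
    · subst hn
      rw [if_pos rfl] at hps
      rw [qint_zero, zero_mul, zero_add]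
      rw [wcand_eq hm, wcand_eq (f := f - 1) (show m = 1 + 2 * (f - 1) from by omega)]
      rw [hTn, hTn1, hps, qint_one, qfact_one, hpow]
      show qfact 0 * (0 + q ^ 0 * 1 * evalK (P m 1)) / _ = _
      show (1 : K) * (0 + q ^ 0 * 1 * evalK (P m 1)) / _ = _
      rw [pow_zero]
      field_simp
      ring
    · have hTn0 : TpolyK f (n - 1) = evalK (P m (n - 1)) := by
        rw [TpolyK_eq, show 2 * f + (n - 1) = m from by omega]
      rw [if_neg (by omega)] at hps
      rw [wcand_eq hm, wcand_eq (f := f) (show m = (n - 1) + 2 * f from by omega),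
        wcand_eq (f := f - 1) (show m = (n + 1) + 2 * (f - 1) from by omega)]
      rw [hTn, hTn0, hTn1, hps, hpow]
      have hqf : qfact n = qfact (n - 1) * qint n := by
        conv_lhs => rw [show n = (n - 1) + 1 from by omega]
        rw [qfact, show n - 1 + 1 = n from by omega]
      have hqf2 : qfact (n + 1) = qfact n * qint (n + 1) := by rw [qfact]
      rw [hqf2, hqf]
      field_simp


lemma X_mul_Δel' (n : ℕ) : Polynomial.X * Δel n = qint (n + 1) • Δel (n + 1) +
    (if n = 0 then 0 else q ^ (n - 1) / (1 - q⁻¹ ^ 2)) • Δel (n - 1) := by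
  cases n with
  | zero => rw [X_mul_Δel_zero, if_pos rfl, zero_smul, add_zero]
  | succ k => rw [X_mul_Δel k, if_neg (Nat.succ_ne_zero k), Nat.add_sub_cancel]

lemma wcand_sum (m : ℕ) :
    (Polynomial.X : Polynomial K) ^ m = ∑ n ∈ Finset.range (m + 1), wcand m n • Δel n := by
  induction m with
  | zero =>
    rw [pow_zero, Finset.sum_range_one, wcand_diag]
    show (1 : Polynomial K) = (1 : K) • (1 : Polynomial K)
    rw [one_smul]
  | succ m ih =>
    have hstep : ∀ k, wcand (m + 1) k • Δel k =
        (qint k * wcand m (k - 1)) • Δel k +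
        (q ^ k / (1 - q⁻¹ ^ 2) * wcand m (k + 1)) • Δel k := by
      intro k
      rw [wcand_rec, add_smul]
    rw [Finset.sum_congr rfl (fun k _ => hstep k), Finset.sum_add_distrib]
    have eA : ∑ k ∈ Finset.range (m + 1 + 1), (qint k * wcand m (k - 1)) • Δel k =
        ∑ n ∈ Finset.range (m + 1), (wcand m n * qint (n + 1)) • Δel (n + 1) := by
      rw [Finset.sum_range_succ']
      simp only [qint_zero, zero_mul, zero_smul, add_zero, Nat.add_sub_cancel]
      exact Finset.sum_congr rfl fun n _ => by rw [mul_comm]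
    have eB : ∑ k ∈ Finset.range (m + 1 + 1), (q ^ k / (1 - q⁻¹ ^ 2) * wcand m (k + 1)) • Δel k =
        ∑ n ∈ Finset.range (m + 1),
          (wcand m n * if n = 0 then 0 else q ^ (n - 1) / (1 - q⁻¹ ^ 2)) • Δel (n - 1) := by
      rw [Finset.sum_range_succ, Finset.sum_range_succ,
        wcand_zero_of_lt (show m < m + 1 from by omega),
        wcand_zero_of_lt (show m < m + 2 from by omega), mul_zero, zero_smul, add_zero,
        mul_zero, zero_smul, add_zero]
      conv_rhs => rw [Finset.sum_range_succ']
      simp only [eq_self_iff_true, if_true, mul_zero, zero_smul, add_zero,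
        if_neg (Nat.succ_ne_zero _), Nat.add_sub_cancel]
      exact Finset.sum_congr rfl fun n _ => by rw [mul_comm]
    rw [eA, eB, ← Finset.sum_add_distrib]
    have : ∀ n ∈ Finset.range (m + 1),
        (wcand m n * qint (n + 1)) • Δel (n + 1) +
          (wcand m n * if n = 0 then 0 else q ^ (n - 1) / (1 - q⁻¹ ^ 2)) • Δel (n - 1) =
        wcand m n • (Polynomial.X * Δel n) := by
      intro n _
      rw [X_mul_Δel' n, smul_add, smul_smul, smul_smul]
    rw [Finset.sum_congr rfl this]
    have : ∑ n ∈ Finset.range (m + 1), wcand m n • (Polynomial.X * Δel n) =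
        Polynomial.X * ∑ n ∈ Finset.range (m + 1), wcand m n • Δel n := by
      rw [Finset.mul_sum]
      exact Finset.sum_congr rfl fun n _ => (mul_smul_comm _ _ _).symm
    rw [this, ← ih, ← pow_succ']


/-- for `0 ≤ n ≤ m`, if `m = n + 2f` then
`w_{m,n}(q) = [n]!·T_{f,n}(q²)/(1−q⁻²)^f`, and `w_{m,n}(q) = 0` if `m ≢ n (mod 2)`. -/
theorem stmt7 (w : ℕ → ℕ → K)
    (hw : ∀ m : ℕ,
      (Polynomial.X : Polynomial K) ^ m = ∑ n ∈ Finset.range (m + 1), w m n • Δel n)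
    (hw0 : ∀ m n : ℕ, m < n → w m n = 0) :
    ∀ m n : ℕ, n ≤ m →
      (∀ f : ℕ, m = n + 2 * f → w m n = qfact n * TpolyK f n / (1 - q⁻¹ ^ 2) ^ f) ∧
      (m % 2 ≠ n % 2 → w m n = 0) := by
  have hmain : ∀ m n : ℕ, n ≤ m → w m n = wcand m n := by
    intro m n hnm
    have h0 : ∑ k ∈ Finset.range (m + 1), (w m k - wcand m k) • Δel k = 0 := by
      have : ∀ k ∈ Finset.range (m + 1), (w m k - wcand m k) • Δel k =
          w m k • Δel k - wcand m k • Δel k := fun k _ => sub_smul _ _ _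
      rw [Finset.sum_congr rfl this, Finset.sum_sub_distrib, ← hw m, ← wcand_sum m,
        sub_self]
    exact sub_eq_zero.mp (sum_smul_Δel_eq_zero m _ h0 n (by omega))
  intro m n hnm
  constructor
  · intro f hf
    rw [hmain m n hnm, wcand_eq hf]
  · intro hpar
    rw [hmain m n hnm]
    unfold wcand
    rw [if_neg (by omega)]

end
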